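/- arXiv:2208.05043 — 2 statements merged into one kernel-verified Lean document; each statement's English description precedes it below -/
import Mathlib

section
/- For every m > 0, the supremum over x < 0 of m*x + log(1 - exp(x)) equals m*log(m) - (1 + m)*log(1 + m). -/
/-!
Substituting `t = exp x` turns the claim into maximising `m log t + log (1 - t)` over `0 < t < 1`.
The maximum sits at `t = m / (1 + m)`, and the upper bound is Gibbs' inequality: bounding `log` by
its tangent line `log y ≤ y - 1` at `y = t / (m / (1 + m))` and at `y = (1 - t) / (1 / (1 + m))`,
weighted by `m` and `1`, the right-hand sides cancel exactly.
-/

open Real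

lemma mul_log_add_log_one_sub_le {m t : ℝ} (hm : 0 < m) (ht₀ : 0 < t) (ht₁ : t < 1) :
    m * log t + log (1 - t) ≤ m * log m - (1 + m) * log (1 + m) := by
  have hm₁ : 0 < 1 + m := by linarith
  have h₁ := log_le_sub_one_of_pos (show 0 < t * (1 + m) / m by positivity)
  have h₂ := log_le_sub_one_of_pos (show 0 < (1 - t) * (1 + m) by nlinarith)
  rw [log_div (by positivity) hm.ne', log_mul ht₀.ne' hm₁.ne'] at h₁
  rw [log_mul (by linarith) hm₁.ne'] at h₂
  have h₁' := mul_le_mul_of_nonneg_left h₁ hm.le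
  rw [show m * (t * (1 + m) / m - 1) = t * (1 + m) - m by field_simp] at h₁'
  linarith

lemma mul_log_add_log_one_sub_eq {m : ℝ} (hm : 0 < m) :
    m * log (m / (1 + m)) + log (1 - m / (1 + m)) = m * log m - (1 + m) * log (1 + m) := by
  have hm₁ : 0 < 1 + m := by linarith
  rw [show 1 - m / (1 + m) = 1 / (1 + m) by field_simp; ring, log_div hm.ne' hm₁.ne',
    log_div one_ne_zero hm₁.ne', log_one]
  ring

theorem stmt_4 (m : ℝ) (hm : 0 < m) :
    sSup ((fun x : ℝ => m * x + Real.log (1 - Real.exp x)) '' {x : ℝ | x < 0}) =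
      m * Real.log m - (1 + m) * Real.log (1 + m) := by
  have hm₁ : 0 < 1 + m := by linarith
  refine IsGreatest.csSup_eq ⟨⟨log (m / (1 + m)), ?_, ?_⟩, ?_⟩
  · exact log_neg (by positivity) ((div_lt_one hm₁).2 (by linarith))
  · simp only [exp_log (div_pos hm hm₁)]
    exact mul_log_add_log_one_sub_eq hm
  · rintro _ ⟨x, hx, rfl⟩
    simpa only [log_exp] using mul_log_add_log_one_sub_le hm (exp_pos x) (exp_lt_one_iff.2 hx)
end

section
/- Let f1, f2 : ℝ → ℝ be convex functions and define the infimal convolution h(x) = inf_t (f1(x - t) + f2(t)). Then for every m, sup_x (m*x - h(x)) = sup_x (m*x - f1(x)) + sup_x (m*x - f2(x)), where all quantities are interpreted in the extended reals. -/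
/-!
Since `m x - (f₁ (x - t) + f₂ t) = (m (x - t) - f₁ (x - t)) + (m t - f₂ t)`, the conjugate of the
infimal convolution is a double supremum over `(x, t)` of a sum of the two conjugate integrands at
`x - t` and `t`. The change of variables `x ↦ x - t` decouples them, and in `EReal` a supremum of
sums of independent families is the sum of the suprema.
-/

namespace EReal

theorem iSup_add_iSup {ι κ : Sort*} (g : ι → EReal) (h : κ → EReal) :
    (⨆ i, g i) + ⨆ j, h j = ⨆ i, ⨆ j, g i + h j := by
  refine le_antisymm (add_le_of_forall_lt fun a ha b hb => ?_)
    (iSup₂_le fun i j => add_le_add (le_iSup g i) (le_iSup h j))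
  obtain ⟨i, hi⟩ := lt_iSup_iff.mp ha
  obtain ⟨j, hj⟩ := lt_iSup_iff.mp hb
  exact (add_le_add hi.le hj.le).trans (le_iSup₂ (f := fun i j => g i + h j) i j)

theorem add_iSup {ι : Sort*} (a : EReal) (g : ι → EReal) :
    a + ⨆ i, g i = ⨆ i, a + g i := by
  simpa only [iSup_const] using iSup_add_iSup (fun _ : Unit => a) g

theorem sub_iInf {ι : Sort*} (a : EReal) (g : ι → EReal) :
    a - ⨅ i, g i = ⨆ i, a - g i := by
  have neg_iInf : -(⨅ i, g i) = ⨆ i, -g i := negOrderIso.map_iInf g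
  simp only [sub_eq_add_neg, neg_iInf, add_iSup]

theorem iSup_iSup_sub_add {G : Type*} [AddGroup G] (φ ψ : G → EReal) :
    ⨆ x, ⨆ t, φ (x - t) + ψ t = (⨆ x, φ x) + ⨆ t, ψ t := by
  rw [iSup_add_iSup, iSup_comm, iSup_comm (f := fun x t => φ x + ψ t)]
  exact iSup_congr fun t => (Equiv.subRight t).iSup_comp (g := fun x => φ x + ψ t)

end EReal

theorem stmt_16_general (f₁ f₂ : ℝ → ℝ) (m : ℝ) :
    (⨆ x : ℝ, (((m * x : ℝ) : EReal) - ⨅ t : ℝ, ((f₁ (x - t) + f₂ t : ℝ) : EReal))) =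
      (⨆ x : ℝ, ((m * x - f₁ x : ℝ) : EReal)) + ⨆ x : ℝ, ((m * x - f₂ x : ℝ) : EReal) := by
  rw [← EReal.iSup_iSup_sub_add]
  refine iSup_congr fun x => ?_
  rw [EReal.sub_iInf]
  refine iSup_congr fun t => ?_
  rw [← EReal.coe_sub, ← EReal.coe_add]
  congr 1
  ring

theorem stmt_16 (f₁ f₂ : ℝ → ℝ) (hf₁ : ConvexOn ℝ Set.univ f₁)
    (hf₂ : ConvexOn ℝ Set.univ f₂) (m : ℝ) :
    (⨆ x : ℝ, (((m * x : ℝ) : EReal) - ⨅ t : ℝ, ((f₁ (x - t) + f₂ t : ℝ) : EReal))) =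
      (⨆ x : ℝ, ((m * x - f₁ x : ℝ) : EReal)) + ⨆ x : ℝ, ((m * x - f₂ x : ℝ) : EReal) :=
  stmt_16_general f₁ f₂ m
end
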